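/- Let k ≥ 2. The real vector space {(v,q) : v a vector field with components in 𝒫^k(ℝ³), q ∈ 𝒫^{k-1}(ℝ³), Δv = ∇q and div v = 0} (the local Trefftz space in dimension 3) has dimension 3k² + 6k + 3 = 3(k+1)². -/

import Mathlib

open MvPolynomial

/-- The formal Laplacian `Δp = ∑ⱼ ∂ⱼ∂ⱼp` of a polynomial in `d` variables. -/
noncomputable def lap {d : ℕ} (p : MvPolynomial (Fin d) ℝ) : MvPolynomial (Fin d) ℝ :=
  ∑ j, pderiv j (pderiv j p)

/-- The formal divergence `div v = ∑ᵢ ∂ᵢvᵢ` of a polynomial vector field. -/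
noncomputable def pdiv {d : ℕ} (v : Fin d → MvPolynomial (Fin d) ℝ) : MvPolynomial (Fin d) ℝ :=
  ∑ i, pderiv i (v i)

/-- The local Trefftz space: pairs `(v, q)` with `v` a vector field with components of total
degree at most `k`, `q` of total degree at most `k - 1`, satisfying `Δv = ∇q` and `div v = 0`. -/
noncomputable def trefftzSpace (d k : ℕ) :
    Submodule ℝ ((Fin d → MvPolynomial (Fin d) ℝ) × MvPolynomial (Fin d) ℝ) where
  carrier := {vq | (∀ i, (vq.1 i).totalDegree ≤ k) ∧ vq.2.totalDegree ≤ k - 1 ∧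
      (∀ i, lap (vq.1 i) = pderiv i vq.2) ∧ pdiv vq.1 = 0}
  add_mem' := by
    rintro ⟨v, q⟩ ⟨w, r⟩ ⟨hv, hq, hvq, hdv⟩ ⟨hw, hr, hwr, hdw⟩
    refine ⟨fun i => le_trans (totalDegree_add _ _) (max_le (hv i) (hw i)),
      le_trans (totalDegree_add _ _) (max_le hq hr), fun i => ?_, ?_⟩
    · show lap (v i + w i) = pderiv i (q + r)
      simp [lap, Finset.sum_add_distrib, ← hvq i, ← hwr i]
    · show pdiv (v + w) = 0
      rw [show pdiv (v + w) = pdiv v + pdiv w by simp [pdiv, Finset.sum_add_distrib],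
        hdv, hdw, add_zero]
  zero_mem' :=
    ⟨fun i => by simp, by simp, fun i => by simp [lap], by simp [pdiv]⟩
  smul_mem' := by
    rintro c ⟨v, q⟩ ⟨hv, hq, hvq, hdv⟩
    refine ⟨fun i => le_trans (totalDegree_smul_le _ _) (hv i),
      le_trans (totalDegree_smul_le _ _) hq, fun i => ?_, ?_⟩
    · show lap (c • v i) = pderiv i (c • q)
      simp [lap, Finset.smul_sum, ← hvq i]
    · show pdiv (c • v) = 0
      rw [show pdiv (c • v) = c • pdiv v by simp [pdiv, Finset.smul_sum], hdv, smul_zero]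

/-!
The Stokes operator `(v, q) ↦ (Δv - ∇q, div v)` maps `(𝒫ᵏ)³ × 𝒫ᵏ⁻¹` onto `(𝒫ᵏ⁻²)³ × 𝒫ᵏ⁻¹`,
and its kernel is the Trefftz space, so by rank–nullity the Trefftz space has dimension
`3 (dim 𝒫ᵏ - dim 𝒫ᵏ⁻²) = 3 (C(k + 1, 2) + C(k + 2, 2)) = 3 (k + 1)²`.

Surjectivity reduces to that of `Δ : 𝒫ᵐ⁺² → 𝒫ᵐ`: once `Δv₀ = f`, replacing `v₀` by
`v₀ + ∇φ` with `Δφ = g - div v₀` and taking `q = Δφ` also gives `div v = g`. To solve `Δu = p`,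
integrate `p` twice in `x₀`; the error is the Laplacian in the remaining variables, which lowers
the degree in those variables by two, so the construction can be iterated.
-/

open Finsupp

namespace MvPolynomial

section Derivatives

variable {R σ : Type*} [CommSemiring R] {i : σ} {p : MvPolynomial σ R} {t : σ →₀ ℕ}

theorem add_single_mem_support_of_mem_support_pderiv (ht : t ∈ (pderiv i p).support) :
    t + single i 1 ∈ p.support := by
  rw [mem_support_iff, coeff_pderiv] at ht
  exact mem_support_iff.mpr (left_ne_zero_of_mul ht)

theorem totalDegree_pderiv_le (i : σ) (p : MvPolynomial σ R) :
    (pderiv i p).totalDegree ≤ p.totalDegree - 1 := by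
  refine Finset.sup_le fun t ht => ?_
  have : (t + single i 1).degree ≤ p.totalDegree :=
    le_totalDegree (add_single_mem_support_of_mem_support_pderiv ht)
  rw [map_add, degree_single] at this
  exact Nat.le_sub_of_add_le this

theorem pderiv_mem_restrictTotalDegree (i : σ) {m : ℕ}
    (hp : p ∈ restrictTotalDegree σ R (m + 1)) : pderiv i p ∈ restrictTotalDegree σ R m := by
  rw [mem_restrictTotalDegree] at hp ⊢
  have := totalDegree_pderiv_le i p
  omega

end Derivatives

theorem pderiv_pderiv_comm {R σ : Type*} [CommRing R] (i j : σ) (p : MvPolynomial σ R) :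
    pderiv i (pderiv j p) = pderiv j (pderiv i p) := by
  suffices ⁅pderiv i, pderiv j⁆ = (0 : Derivation R (MvPolynomial σ R) (MvPolynomial σ R)) by
    rw [← sub_eq_zero, ← Derivation.commutator_apply, this, Derivation.zero_apply]
  refine derivation_ext fun k => ?_
  classical
  simp [Derivation.commutator_apply, pderiv_X, Pi.single_apply, apply_ite]

section Antiderivative

variable {K σ : Type*} [Field K]

noncomputable def antideriv (i : σ) : MvPolynomial σ K →ₗ[K] MvPolynomial σ K :=
  (basisMonomials σ K).constr K fun s => monomial (s + single i 1) ((s i + 1 : K)⁻¹)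

theorem antideriv_monomial (i : σ) (s : σ →₀ ℕ) (c : K) :
    antideriv i (monomial s c) = monomial (s + single i 1) (c * (s i + 1 : K)⁻¹) := by
  rw [← mul_one c, ← smul_eq_mul, ← smul_monomial, map_smul, antideriv,
    show monomial s (1 : K) = basisMonomials σ K s from rfl, Module.Basis.constr_basis,
    smul_monomial, smul_eq_mul, smul_eq_mul, mul_one]

theorem pderiv_antideriv [CharZero K] (i : σ) (p : MvPolynomial σ K) :
    pderiv i (antideriv i p) = p := by
  classical
  induction p using MvPolynomial.induction_on' with
  | monomial s c =>
    rw [antideriv_monomial, pderiv_monomial, add_tsub_cancel_right]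
    congr 1
    simp only [Finsupp.add_apply, single_eq_same, Nat.cast_add, Nat.cast_one]
    field_simp
  | add p q hp hq => rw [map_add, map_add, hp, hq]

theorem exists_mem_support_of_mem_support_antideriv {i : σ} {p : MvPolynomial σ K}
    {t : σ →₀ ℕ} (ht : t ∈ (antideriv i p).support) :
    ∃ s ∈ p.support, t = s + single i 1 := by
  classical
  rw [p.as_sum, map_sum] at ht
  obtain ⟨s, hs, ht⟩ := Finset.mem_biUnion.mp (support_sum ht)
  rw [antideriv_monomial] at ht
  exact ⟨s, hs, Finset.mem_singleton.mp (support_monomial_subset ht)⟩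

theorem totalDegree_antideriv_le (i : σ) (p : MvPolynomial σ K) :
    (antideriv i p).totalDegree ≤ p.totalDegree + 1 := by
  refine Finset.sup_le fun t ht => ?_
  obtain ⟨s, hs, rfl⟩ := exists_mem_support_of_mem_support_antideriv ht
  have : s.degree ≤ p.totalDegree := le_totalDegree hs
  show (s + single i 1).degree ≤ _
  rw [map_add, degree_single]
  omega

end Antiderivative

theorem finrank_restrictTotalDegree {σ : Type*} (R : Type*) [CommRing R] [StrongRankCondition R]
    (m : ℕ) : Module.finrank R (restrictTotalDegree σ R m) = {s : σ →₀ ℕ | s.degree ≤ m}.ncard :=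
  (Module.finrank_eq_nat_card_basis (basisRestrictSupport R _)).trans (Nat.card_coe_set_eq _)

end MvPolynomial

namespace Finsupp

variable {σ : Type*}

theorem ncard_degree_eq [Fintype σ] (m : ℕ) :
    {s : σ →₀ ℕ | s.degree = m}.ncard = (Fintype.card σ + m - 1).choose m := by
  classical
  rw [← Nat.card_coe_set_eq, ← Sym.card_sym_eq_choose, ← Nat.card_eq_fintype_card]
  exact Nat.card_congr (Sym.equivNatSum σ m).symm

theorem ncard_degree_le_succ [Finite σ] (m : ℕ) :
    {s : σ →₀ ℕ | s.degree ≤ m + 1}.ncard =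
      {s : σ →₀ ℕ | s.degree ≤ m}.ncard + {s : σ →₀ ℕ | s.degree = m + 1}.ncard := by
  rw [← Set.ncard_union_eq _ (finite_of_degree_le m) (finite_of_degree_eq (m + 1))]
  · congr 1
    ext s
    simp only [Set.mem_ofPred_eq, Set.mem_union]
    omega
  · exact Set.disjoint_left.mpr fun s (hs : _ ≤ m) (hs' : _ = m + 1) => by omega

end Finsupp

section Laplacian

variable {d : ℕ}

noncomputable def lapLinearMap : MvPolynomial (Fin d) ℝ →ₗ[ℝ] MvPolynomial (Fin d) ℝ :=
  ∑ j, (pderiv j).toLinearMap ∘ₗ (pderiv j).toLinearMap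

theorem lapLinearMap_apply (p : MvPolynomial (Fin d) ℝ) : lapLinearMap p = lap p := by
  simp [lapLinearMap, lap]

theorem lap_add (p q : MvPolynomial (Fin d) ℝ) : lap (p + q) = lap p + lap q := by
  simp only [← lapLinearMap_apply, map_add]

theorem lap_sub (p q : MvPolynomial (Fin d) ℝ) : lap (p - q) = lap p - lap q := by
  simp only [← lapLinearMap_apply, map_sub]

theorem lap_pderiv (i : Fin d) (p : MvPolynomial (Fin d) ℝ) :
    lap (pderiv i p) = pderiv i (lap p) := by
  simp only [lap, map_sum, pderiv_pderiv_comm i]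

theorem totalDegree_lap_le (p : MvPolynomial (Fin d) ℝ) :
    (lap p).totalDegree ≤ p.totalDegree - 2 := by
  refine totalDegree_finsetSum_le fun j _ => ?_
  have := totalDegree_pderiv_le j (pderiv j p)
  have := totalDegree_pderiv_le j p
  omega

/-- `weight (Fin.cons 0 1)` is the degree in the variables other than `x₀`, which integration
in `x₀` leaves unchanged. -/
theorem exists_lap_eq_of_weight_lt (N : ℕ) :
    ∀ p : MvPolynomial (Fin (d + 1)) ℝ, (∀ s ∈ p.support, weight (Fin.cons 0 1) s < N) →
      ∃ u, lap u = p ∧ u.totalDegree ≤ p.totalDegree + 2 := by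
  induction N with
  | zero =>
    intro p hp
    obtain rfl : p = 0 := support_eq_empty.mp <| Finset.eq_empty_of_forall_notMem
      fun s hs => Nat.not_lt_zero _ (hp s hs)
    exact ⟨0, by simp [lap], by simp⟩
  | succ N ih =>
    intro p hp
    set u₀ := antideriv 0 (antideriv 0 p)
    set r := ∑ j : Fin d, pderiv j.succ (pderiv j.succ u₀)
    have hlap : lap u₀ = p + r := by
      rw [lap, Fin.sum_univ_succ, pderiv_antideriv, pderiv_antideriv]
    have hdeg₀ : u₀.totalDegree ≤ p.totalDegree + 2 :=
      (totalDegree_antideriv_le _ _).trans (by have := totalDegree_antideriv_le 0 p; omega)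
    have hdegr : r.totalDegree ≤ p.totalDegree := by
      rw [eq_sub_of_add_eq' hlap.symm]
      have := totalDegree_lap_le u₀
      exact (totalDegree_sub _ _).trans (max_le (by omega) le_rfl)
    have hr : ∀ t ∈ r.support, weight (Fin.cons 0 1) t < N := by
      classical
      intro t ht
      obtain ⟨j, -, ht⟩ := Finset.mem_biUnion.mp (support_sum ht)
      obtain ⟨s', hs', hts'⟩ := exists_mem_support_of_mem_support_antideriv <|
        add_single_mem_support_of_mem_support_pderiv <|
          add_single_mem_support_of_mem_support_pderiv ht
      obtain ⟨s, hs, rfl⟩ := exists_mem_support_of_mem_support_antideriv hs'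
      have hweight := congrArg (weight (Fin.cons 0 1 : Fin (d + 1) → ℕ)) hts'
      simp only [map_add, weight_single, Fin.cons_zero, Fin.cons_succ, Pi.one_apply, smul_eq_mul,
        mul_one, mul_zero, add_zero] at hweight
      have := hp s hs
      omega
    obtain ⟨u₁, hu₁, hdeg₁⟩ := ih r hr
    refine ⟨u₀ - u₁, by rw [lap_sub, hlap, hu₁, add_sub_cancel_right], ?_⟩
    exact (totalDegree_sub _ _).trans (max_le hdeg₀ (by omega))

theorem exists_lap_eq (p : MvPolynomial (Fin (d + 1)) ℝ) :
    ∃ u, lap u = p ∧ u.totalDegree ≤ p.totalDegree + 2 :=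
  exists_lap_eq_of_weight_lt _ p fun _ hs =>
    Nat.lt_succ_of_le (le_weightedTotalDegree (Fin.cons 0 1) hs)

theorem lap_mem_restrictTotalDegree {m : ℕ} {p : MvPolynomial (Fin d) ℝ}
    (hp : p ∈ restrictTotalDegree (Fin d) ℝ (m + 2)) :
    lap p ∈ restrictTotalDegree (Fin d) ℝ m := by
  rw [mem_restrictTotalDegree] at hp ⊢
  have := totalDegree_lap_le p
  omega

end Laplacian

section StokesOperator

variable {d : ℕ}

noncomputable def pderivRestrict (i : Fin d) (m : ℕ) :
    restrictTotalDegree (Fin d) ℝ (m + 1) →ₗ[ℝ] restrictTotalDegree (Fin d) ℝ m :=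
  (pderiv i).toLinearMap.restrict fun _ => pderiv_mem_restrictTotalDegree i

noncomputable def lapRestrict (m : ℕ) :
    restrictTotalDegree (Fin d) ℝ (m + 2) →ₗ[ℝ] restrictTotalDegree (Fin d) ℝ m :=
  lapLinearMap.restrict fun p hp => lapLinearMap_apply p ▸ lap_mem_restrictTotalDegree hp

@[simp]
theorem coe_pderivRestrict (i : Fin d) (m : ℕ) (p : restrictTotalDegree (Fin d) ℝ (m + 1)) :
    (pderivRestrict i m p : MvPolynomial (Fin d) ℝ) = pderiv i (p : MvPolynomial (Fin d) ℝ) :=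
  rfl

@[simp]
theorem coe_lapRestrict (m : ℕ) (p : restrictTotalDegree (Fin d) ℝ (m + 2)) :
    (lapRestrict m p : MvPolynomial (Fin d) ℝ) = lap (p : MvPolynomial (Fin d) ℝ) :=
  lapLinearMap_apply _

theorem lapRestrict_surjective (m : ℕ) : Function.Surjective (lapRestrict (d := d + 1) m) := by
  intro p
  obtain ⟨u, hu, hdeg⟩ := exists_lap_eq (p : MvPolynomial (Fin (d + 1)) ℝ)
  have hp := (mem_restrictTotalDegree _ _ _).mp p.2
  exact ⟨⟨u, (mem_restrictTotalDegree _ _ _).mpr (by omega)⟩, Subtype.ext (by simpa using hu)⟩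

variable (d) in
noncomputable def stokesOperator (n : ℕ) :
    (Fin d → restrictTotalDegree (Fin d) ℝ (n + 2)) × restrictTotalDegree (Fin d) ℝ (n + 1) →ₗ[ℝ]
      (Fin d → restrictTotalDegree (Fin d) ℝ n) × restrictTotalDegree (Fin d) ℝ (n + 1) :=
  (LinearMap.pi fun i => lapRestrict n ∘ₗ LinearMap.proj i ∘ₗ LinearMap.fst _ _ _ -
      pderivRestrict i n ∘ₗ LinearMap.snd _ _ _).prod
    (∑ i, pderivRestrict i (n + 1) ∘ₗ LinearMap.proj i ∘ₗ LinearMap.fst _ _ _)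

variable {n : ℕ}

theorem coe_stokesOperator_fst (x : (Fin d → restrictTotalDegree (Fin d) ℝ (n + 2)) ×
    restrictTotalDegree (Fin d) ℝ (n + 1)) (i : Fin d) :
    ((stokesOperator d n x).1 i : MvPolynomial (Fin d) ℝ) =
      lap (x.1 i : MvPolynomial (Fin d) ℝ) - pderiv i (x.2 : MvPolynomial (Fin d) ℝ) := by
  simp [stokesOperator]

theorem coe_stokesOperator_snd (x : (Fin d → restrictTotalDegree (Fin d) ℝ (n + 2)) ×
    restrictTotalDegree (Fin d) ℝ (n + 1)) :
    ((stokesOperator d n x).2 : MvPolynomial (Fin d) ℝ) =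
      pdiv fun i => (x.1 i : MvPolynomial (Fin d) ℝ) := by
  simp [stokesOperator, pdiv]

theorem stokesOperator_surjective : Function.Surjective (stokesOperator (d + 1) n) := by
  rintro ⟨f, g⟩
  choose v₀ hv₀ using fun i => lapRestrict_surjective n (f i)
  set h := g - ∑ i, pderivRestrict i (n + 1) (v₀ i)
  obtain ⟨φ, hφ⟩ := lapRestrict_surjective (n + 1) h
  have hv₀ (i) : lap (v₀ i : MvPolynomial (Fin (d + 1)) ℝ) = f i := by
    simpa using congr($(hv₀ i).1)
  have hφ : lap (φ : MvPolynomial (Fin (d + 1)) ℝ) = h := by simpa using congr($(hφ).1)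
  refine ⟨(fun i => v₀ i + pderivRestrict i (n + 2) φ, h),
    Prod.ext (funext fun i => Subtype.ext ?_) (Subtype.ext ?_)⟩
  · rw [coe_stokesOperator_fst, Submodule.coe_add, coe_pderivRestrict, lap_add, lap_pderiv, hφ,
      hv₀, add_sub_cancel_right]
  · rw [coe_stokesOperator_snd]
    simp only [pdiv, Submodule.coe_add, coe_pderivRestrict, map_add, Finset.sum_add_distrib]
    rw [← lap, hφ]
    simp [h]

theorem mem_ker_stokesOperator_iff {x : (Fin d → restrictTotalDegree (Fin d) ℝ (n + 2)) ×
    restrictTotalDegree (Fin d) ℝ (n + 1)} :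
    x ∈ LinearMap.ker (stokesOperator d n) ↔
      (∀ i, lap (x.1 i : MvPolynomial (Fin d) ℝ) = pderiv i (x.2 : MvPolynomial (Fin d) ℝ)) ∧
        pdiv (fun i => (x.1 i : MvPolynomial (Fin d) ℝ)) = 0 := by
  simp only [LinearMap.mem_ker, Prod.ext_iff, funext_iff, Prod.fst_zero, Prod.snd_zero,
    Pi.zero_apply, Subtype.ext_iff, coe_stokesOperator_fst, coe_stokesOperator_snd,
    Submodule.coe_zero, sub_eq_zero]

variable (n) in
noncomputable def kerStokesOperatorEquiv :
    LinearMap.ker (stokesOperator d n) ≃ₗ[ℝ] trefftzSpace d (n + 2) where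
  toFun x := ⟨(fun i => x.1.1 i, x.1.2), fun i => (mem_restrictTotalDegree _ _ _).mp (x.1.1 i).2,
    (mem_restrictTotalDegree _ _ _).mp x.1.2.2, mem_ker_stokesOperator_iff.mp x.2⟩
  invFun y := ⟨(fun i => ⟨y.1.1 i, (mem_restrictTotalDegree _ _ _).mpr (y.2.1 i)⟩,
    ⟨y.1.2, (mem_restrictTotalDegree _ _ _).mpr y.2.2.1⟩), mem_ker_stokesOperator_iff.mpr y.2.2.2⟩
  map_add' _ _ := rfl
  map_smul' _ _ := rfl
  left_inv _ := rfl
  right_inv _ := rfl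

end StokesOperator

theorem finrank_trefftzSpace (d n : ℕ) :
    Module.finrank ℝ (trefftzSpace (d + 1) (n + 2)) =
      (d + 1) * ((d + n + 1).choose (n + 1) + (d + n + 2).choose (n + 2)) := by
  have hrank := LinearMap.finrank_range_add_finrank_ker (stokesOperator (d + 1) n)
  rw [LinearMap.range_eq_top.mpr stokesOperator_surjective, finrank_top,
    (kerStokesOperatorEquiv n).finrank_eq, Module.finrank_prod, Module.finrank_prod,
    Module.finrank_pi_fintype, Module.finrank_pi_fintype] at hrank
  have hdim : Module.finrank ℝ (restrictTotalDegree (Fin (d + 1)) ℝ (n + 2)) =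
      Module.finrank ℝ (restrictTotalDegree (Fin (d + 1)) ℝ n) +
        (d + n + 1).choose (n + 1) + (d + n + 2).choose (n + 2) := by
    rw [finrank_restrictTotalDegree, finrank_restrictTotalDegree, ncard_degree_le_succ (n + 1),
      ncard_degree_le_succ n, ncard_degree_eq, ncard_degree_eq, Fintype.card_fin,
      show d + 1 + (n + 1) - 1 = d + n + 1 by omega,
      show d + 1 + (n + 1 + 1) - 1 = d + n + 2 by omega]
  simp only [Finset.sum_const, Finset.card_univ, Fintype.card_fin, smul_eq_mul, hdim] at hrank
  linarith

theorem Nat.choose_add_one_add_choose_add_two (n : ℕ) :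
    (n + 3).choose (n + 1) + (n + 4).choose (n + 2) = (n + 3) ^ 2 := by
  rw [Nat.choose_symm_of_eq_add (b := 2) rfl, Nat.choose_symm_of_eq_add (n := n + 4) (b := 2) rfl]
  qify
  rw [Nat.cast_choose_two, Nat.cast_choose_two]
  push_cast
  ring

/-- For `k ≥ 2`, the local Trefftz space in dimension 3 has dimension
`3k² + 6k + 3 = 3(k + 1)²`. -/
theorem finrank_trefftzSpace_dim3 (k : ℕ) (hk : 2 ≤ k) :
    Module.finrank ℝ (trefftzSpace 3 k) = 3 * k ^ 2 + 6 * k + 3 := by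
  obtain ⟨n, rfl⟩ := Nat.exists_eq_add_of_le' hk
  rw [finrank_trefftzSpace 2 n, show 2 + n + 1 = n + 3 by ring, show 2 + n + 2 = n + 4 by ring,
    Nat.choose_add_one_add_choose_add_two]
  ring
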